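/- If honest replicas only enter view l+1 upon receiving a new-view message directly from the new leader, and any honest replica entering view l+1 forwards the new-view message to all replicas causing every honest replica to exit view l, then no two honest replicas are ever simultaneously in different views. -/

import Mathlib

section
variable {ι : Type*} {honest : ι → Prop} {view : ι → ℕ → Option ℕ}
  {forwarded : ι → ℕ → ℕ → Prop}

/-- A replica in view `b = l + 1` forwarded the new-view for `l + 1` before, which has already
expelled every honest replica from all views `≤ l`. -/
theorem view_le_of_view_eq_some
    (h1 : ∀ i t l, honest i → view i t = some (l + 1) →
      ∃ t0, t0 < t ∧ forwarded i (l + 1) t0)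
    (h2 : ∀ i t0 l, honest i → forwarded i (l + 1) t0 →
      ∀ j t, honest j → t0 < t → ∀ l', l' ≤ l → view j t ≠ some l')
    {i j : ι} {t a b : ℕ} (hi : honest i) (hj : honest j)
    (ha : view i t = some a) (hb : view j t = some b) : b ≤ a := by
  by_contra! hab
  obtain ⟨l, rfl⟩ : ∃ l, b = l + 1 := Nat.exists_eq_add_one.mpr (by omega)
  obtain ⟨t0, ht0, hforward⟩ := h1 j t l hj hb
  exact h2 j t0 l hj hforward i t hi ht0 a (by omega) ha

end

theorem no_two_views {ι : Type*} (honest : ι → Prop)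
    (view : ι → ℕ → Option ℕ) (forwarded : ι → ℕ → ℕ → Prop)
    (h1 : ∀ i t l, honest i → view i t = some (l + 1) →
      ∃ t0, t0 < t ∧ forwarded i (l + 1) t0)
    (h2 : ∀ i t0 l, honest i → forwarded i (l + 1) t0 →
      ∀ j t, honest j → t0 < t → ∀ l', l' ≤ l → view j t ≠ some l') :
    ∀ i j t a b, honest i → honest j →
      view i t = some a → view j t = some b → a = b := by
  intro i j t a b hi hj ha hb
  exact le_antisymm (view_le_of_view_eq_some h1 h2 hj hi hb ha)
    (view_le_of_view_eq_some h1 h2 hi hj ha hb)
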